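/- arXiv:1101.3710 — 9 statements merged into one kernel-verified Lean document; each statement's English description precedes it below -/
import Mathlib

section
/- Let a_1, a_2, a_3 ≥ 2 be pairwise coprime integers and b_1, b_2, b_3 positive integers with 0 < b_i < a_i, satisfying b_1/a_1 + b_2/a_2 + b_3/a_3 = 1 + ε/(a_1 a_2 a_3) with ε ∈ {−1, 1}, ordered so that b_1/a_1 > b_2/a_2 > b_3/a_3, and with b_1/a_1 ≥ 1/2. Then b_3/a_3 < 1/4. -/
/-!
Suppose `b₃/a₃ ≥ 1/4`. Two distinct fractions with denominators `a₂, a₃` differ by at least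
`1/(a₂ a₃)`, so `b₂/a₂ ≥ 1/4 + 1/(a₂ a₃)`, and with `b₁/a₁ ≥ 1/2` the left-hand side of the
defining equation is at least `1 + 1/(a₂ a₃)`. The right-hand side is at most
`1 + 1/(a₁ a₂ a₃) < 1 + 1/(a₂ a₃)`, a contradiction.
-/

theorem Int.div_add_one_div_mul_le_of_div_lt {a b c d : ℤ} (ha : 0 < a) (hc : 0 < c)
    (h : (b : ℚ) / a < d / c) : (b : ℚ) / a + 1 / (a * c) ≤ d / c := by
  have ha' : (0 : ℚ) < a := by exact_mod_cast ha
  have hc' : (0 : ℚ) < c := by exact_mod_cast hc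
  have hlt : b * c < d * a := by exact_mod_cast (div_lt_div_iff₀ ha' hc').mp h
  have hle : ((b * c + 1 : ℤ) : ℚ) ≤ d * a := by exact_mod_cast hlt
  rw [div_add_div _ _ ha'.ne' (by positivity), div_le_div_iff₀ (by positivity) hc']
  push_cast at hle
  nlinarith [mul_le_mul_of_nonneg_right hle (mul_pos ha' hc').le]

theorem stmt_2_general (a₁ a₂ a₃ b₁ b₂ b₃ ε : ℤ)
    (ha₁ : 2 ≤ a₁) (ha₂ : 2 ≤ a₂) (ha₃ : 2 ≤ a₃)
    (hε : ε = 1 ∨ ε = -1)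
    (heq : (b₁ : ℚ) / a₁ + (b₂ : ℚ) / a₂ + (b₃ : ℚ) / a₃
      = 1 + (ε : ℚ) / ((a₁ : ℚ) * a₂ * a₃))
    (hord₂ : (b₃ : ℚ) / a₃ < (b₂ : ℚ) / a₂)
    (hhalf : (1 : ℚ) / 2 ≤ (b₁ : ℚ) / a₁) :
    (b₃ : ℚ) / a₃ < 1 / 4 := by
  have ha₁' : (1 : ℚ) < a₁ := by exact_mod_cast ha₁
  have ha₂' : (0 : ℚ) < a₂ := by exact_mod_cast (by omega : 0 < a₂)
  have ha₃' : (0 : ℚ) < a₃ := by exact_mod_cast (by omega : 0 < a₃)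
  have hgap := Int.div_add_one_div_mul_le_of_div_lt (by omega) (by omega) hord₂
  have hε' : (ε : ℚ) ≤ 1 := by rcases hε with rfl | rfl <;> norm_num
  have hexcess : (ε : ℚ) / (a₁ * a₂ * a₃) < 1 / (a₃ * a₂) := by
    rw [div_lt_div_iff₀ (by positivity) (by positivity)]
    nlinarith [mul_pos ha₂' ha₃']
  by_contra! h
  linarith

theorem stmt_2 (a₁ a₂ a₃ b₁ b₂ b₃ ε : ℤ)
    (ha₁ : 2 ≤ a₁) (ha₂ : 2 ≤ a₂) (ha₃ : 2 ≤ a₃)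
    (hcop12 : IsCoprime a₁ a₂) (hcop13 : IsCoprime a₁ a₃) (hcop23 : IsCoprime a₂ a₃)
    (hb₁ : 0 < b₁) (hb₁' : b₁ < a₁) (hb₂ : 0 < b₂) (hb₂' : b₂ < a₂)
    (hb₃ : 0 < b₃) (hb₃' : b₃ < a₃)
    (hε : ε = 1 ∨ ε = -1)
    (heq : (b₁ : ℚ) / a₁ + (b₂ : ℚ) / a₂ + (b₃ : ℚ) / a₃
      = 1 + (ε : ℚ) / ((a₁ : ℚ) * a₂ * a₃))
    (hord₁ : (b₂ : ℚ) / a₂ < (b₁ : ℚ) / a₁) (hord₂ : (b₃ : ℚ) / a₃ < (b₂ : ℚ) / a₂)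
    (hhalf : (1 : ℚ) / 2 ≤ (b₁ : ℚ) / a₁) :
    (b₃ : ℚ) / a₃ < 1 / 4 :=
  stmt_2_general a₁ a₂ a₃ b₁ b₂ b₃ ε ha₁ ha₂ ha₃ hε heq hord₂ hhalf
end

section
/- Let a_1, a_2, a_3 ≥ 2 be pairwise coprime integers and b_1, b_2, b_3 positive integers with 0 < b_i < a_i, satisfying b_1/a_1 + b_2/a_2 + b_3/a_3 = 1 + ε/(a_1 a_2 a_3) with ε ∈ {−1, 1}, ordered so that b_1/a_1 > b_2/a_2 > b_3/a_3. Set α_1 = 1 − b_1/a_1 and α_2 = b_2/a_2. Then α_2 > α_1 − α_2. -/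
/-!
Eliminating `b₁/a₁` with the defining equation, the claim becomes
`-ε/(a₁a₂a₃) < b₂/a₂ - b₃/a₃`. Two distinct fractions with denominators `a₂, a₃` differ by at least
`1/(a₂a₃)`, which exceeds `1/(a₁a₂a₃) ≥ -ε/(a₁a₂a₃)` because `a₁ > 1`.
-/

theorem Int.one_div_mul_le_div_sub_div {K : Type*} [Field K] [LinearOrder K] [IsStrictOrderedRing K]
    {a b c d : ℤ} (ha : 0 < a) (hd : 0 < d) (h : (c : K) / d < b / a) :
    1 / ((a : K) * d) ≤ b / a - c / d := by
  have haK : (0 : K) < a := by exact_mod_cast ha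
  have hdK : (0 : K) < d := by exact_mod_cast hd
  have hlt : c * a < b * d := by
    rw [div_lt_div_iff₀ hdK haK] at h
    exact_mod_cast h
  have hle : ((c * a + 1 : ℤ) : K) ≤ (b * d : ℤ) := by exact_mod_cast hlt
  push_cast at hle
  rw [div_sub_div _ _ haK.ne' hdK.ne', div_le_div_iff_of_pos_right (by positivity)]
  linarith

theorem stmt_3_general (a₁ a₂ a₃ b₁ b₂ b₃ ε : ℤ)
    (ha₁ : 2 ≤ a₁) (ha₂ : 2 ≤ a₂) (ha₃ : 2 ≤ a₃)
    (hε : ε = 1 ∨ ε = -1)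
    (heq : (b₁ : ℚ) / a₁ + (b₂ : ℚ) / a₂ + (b₃ : ℚ) / a₃
      = 1 + (ε : ℚ) / ((a₁ : ℚ) * a₂ * a₃))
    (hord₂ : (b₃ : ℚ) / a₃ < (b₂ : ℚ) / a₂) :
    (b₂ : ℚ) / a₂ > (1 - (b₁ : ℚ) / a₁) - (b₂ : ℚ) / a₂ := by
  have ha₁q : (1 : ℚ) < a₁ := by exact_mod_cast ha₁
  have ha₂q : (0 : ℚ) < a₂ := by exact_mod_cast (by omega : (0 : ℤ) < a₂)
  have ha₃q : (0 : ℚ) < a₃ := by exact_mod_cast (by omega : (0 : ℤ) < a₃)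
  have hgap : 1 / ((a₂ : ℚ) * a₃) ≤ b₂ / a₂ - b₃ / a₃ :=
    Int.one_div_mul_le_div_sub_div (by omega) (by omega) hord₂
  have hε_le : -(ε : ℚ) / (a₁ * a₂ * a₃) ≤ 1 / (a₁ * a₂ * a₃) := by
    gcongr
    rcases hε with rfl | rfl <;> norm_num
  have hdenom : 1 / ((a₁ : ℚ) * a₂ * a₃) < 1 / (a₂ * a₃) := by
    rw [mul_assoc]
    exact one_div_lt_one_div_of_lt (by positivity) (lt_mul_of_one_lt_left (by positivity) ha₁q)
  rw [neg_div] at hε_le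
  linarith

theorem stmt_3 (a₁ a₂ a₃ b₁ b₂ b₃ ε : ℤ)
    (ha₁ : 2 ≤ a₁) (ha₂ : 2 ≤ a₂) (ha₃ : 2 ≤ a₃)
    (hcop12 : IsCoprime a₁ a₂) (hcop13 : IsCoprime a₁ a₃) (hcop23 : IsCoprime a₂ a₃)
    (hb₁ : 0 < b₁) (hb₁' : b₁ < a₁) (hb₂ : 0 < b₂) (hb₂' : b₂ < a₂)
    (hb₃ : 0 < b₃) (hb₃' : b₃ < a₃)
    (hε : ε = 1 ∨ ε = -1)
    (heq : (b₁ : ℚ) / a₁ + (b₂ : ℚ) / a₂ + (b₃ : ℚ) / a₃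
      = 1 + (ε : ℚ) / ((a₁ : ℚ) * a₂ * a₃))
    (hord₁ : (b₂ : ℚ) / a₂ < (b₁ : ℚ) / a₁) (hord₂ : (b₃ : ℚ) / a₃ < (b₂ : ℚ) / a₂) :
    (b₂ : ℚ) / a₂ > (1 - (b₁ : ℚ) / a₁) - (b₂ : ℚ) / a₂ :=
  stmt_3_general a₁ a₂ a₃ b₁ b₂ b₃ ε ha₁ ha₂ ha₃ hε heq hord₂
end

section
/- Let a_1, a_2, a_3 ≥ 2 be pairwise coprime integers and b_1, b_2, b_3 positive integers with 0 < b_i < a_i, satisfying b_1/a_1 + b_2/a_2 + b_3/a_3 = 1 + ε/(a_1 a_2 a_3) with ε ∈ {−1, 1}, ordered with b_1/a_1 > b_2/a_2 > b_3/a_3 and b_1/a_1 ≥ 1/2. Set α_1 = 1 − b_1/a_1, α_2 = b_2/a_2, and N = ⌊1/(α_1 − α_2)⌋. Then N ≥ 4. -/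
/-!
Write `xᵢ = bᵢ / aᵢ` and `δ = ε / (a₁ a₂ a₃)`. Then `α₁ - α₂ = 1 - x₁ - x₂ = x₃ - δ`, and since `x₃`
is the smallest term while `x₁ ≥ 1/2`, `4 x₃ < 2 (x₂ + x₃) ≤ 1 + 2δ`; so `α₁ - α₂ < 1/4 + 1/(2 a₁ a₂ a₃)`.
As `α₁ - α₂ = b / (a₁ a₂)` with `b ∈ ℤ` and `a₃ ≥ 2`, integrality forces `4 b ≤ a₁ a₂`, i.e.
`α₁ - α₂ ≤ 1/4`. Positivity of `α₁ - α₂` comes from `x₃ ≥ 1/a₃ > |δ|`.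
-/

theorem le_floor_one_div {K : Type*} [Field K] [LinearOrder K] [IsStrictOrderedRing K]
    [FloorRing K] {d : K} {n : ℕ} (hd : 0 < d) (h : d ≤ 1 / n) : (n : ℤ) ≤ ⌊1 / d⌋ := by
  rw [Int.le_floor, Int.cast_natCast, le_div_iff₀ hd]
  rcases n.eq_zero_or_pos with rfl | hn
  · simp
  · rwa [le_div_iff₀' (by exact_mod_cast hn)] at h

theorem Int.le_of_div_lt_one_add_one_div {K : Type*} [Field K] [LinearOrder K]
    [IsStrictOrderedRing K] {b m : ℤ} (hm : 0 < m) (h : (b : K) / m < 1 + 1 / m) : b ≤ m := by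
  have hmK : (0 : K) < m := by exact_mod_cast hm
  rw [div_lt_iff₀ hmK, add_mul, one_div_mul_cancel hmK.ne', one_mul] at h
  exact Int.lt_add_one_iff.mp (by exact_mod_cast h)

theorem stmt_4_general (a₁ a₂ a₃ b₁ b₂ b₃ ε : ℤ)
    (ha₁ : 2 ≤ a₁) (ha₂ : 2 ≤ a₂) (ha₃ : 2 ≤ a₃)
    (hb₃ : 0 < b₃)
    (hε : ε = 1 ∨ ε = -1)
    (heq : (b₁ : ℚ) / a₁ + (b₂ : ℚ) / a₂ + (b₃ : ℚ) / a₃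
      = 1 + (ε : ℚ) / ((a₁ : ℚ) * a₂ * a₃))
    (hord₂ : (b₃ : ℚ) / a₃ < (b₂ : ℚ) / a₂)
    (hhalf : (1 : ℚ) / 2 ≤ (b₁ : ℚ) / a₁) :
    4 ≤ ⌊(1 : ℚ) / ((1 - (b₁ : ℚ) / a₁) - (b₂ : ℚ) / a₂)⌋ := by
  have ha₁Q : (2 : ℚ) ≤ a₁ := by exact_mod_cast ha₁
  have ha₂Q : (2 : ℚ) ≤ a₂ := by exact_mod_cast ha₂
  have ha₃Q : (2 : ℚ) ≤ a₃ := by exact_mod_cast ha₃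
  have hm : (4 : ℚ) ≤ a₁ * a₂ := by nlinarith
  set b : ℤ := a₁ * a₂ - b₁ * a₂ - b₂ * a₁
  set P : ℚ := a₁ * a₂ * a₃ with hP
  have hd : 1 - (b₁ : ℚ) / a₁ - b₂ / a₂ = b / (a₁ * a₂) := by
    simp only [b]; push_cast; field_simp
  have hδ : |(ε : ℚ) / P| ≤ 1 / P := by
    rw [abs_div, abs_of_pos (by positivity : 0 < P)]
    gcongr
    rcases hε with rfl | rfl <;> norm_num
  obtain ⟨hδ₁, hδ₂⟩ := abs_le.mp hδ
  have hP_lt : 1 / P < 1 / a₃ := by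
    rw [hP]; gcongr; nlinarith
  have hx₃ : 1 / (a₃ : ℚ) ≤ b₃ / a₃ := by
    gcongr; exact_mod_cast hb₃
  have hpos : 0 < 1 - (b₁ : ℚ) / a₁ - b₂ / a₂ := by linarith
  have hsmall : 4 * (1 - (b₁ : ℚ) / a₁ - b₂ / a₂) < 1 + 2 / P := by
    rw [show 2 / P = 2 * (1 / P) by ring]; linarith
  have h2P : 2 / P ≤ 1 / (a₁ * a₂) := by
    rw [hP, div_le_div_iff₀ (by positivity) (by positivity)]; nlinarith
  have h4b : 4 * b ≤ a₁ * a₂ := by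
    refine Int.le_of_div_lt_one_add_one_div (K := ℚ) (by positivity) ?_
    push_cast; rw [mul_div_assoc, ← hd]; linarith
  have h4bQ : (4 : ℚ) * b ≤ a₁ * a₂ := by exact_mod_cast h4b
  refine le_floor_one_div (n := 4) hpos ?_
  rw [hd, div_le_div_iff₀ (by positivity) (by positivity)]
  push_cast; linarith

theorem stmt_4 (a₁ a₂ a₃ b₁ b₂ b₃ ε : ℤ)
    (ha₁ : 2 ≤ a₁) (ha₂ : 2 ≤ a₂) (ha₃ : 2 ≤ a₃)
    (hcop12 : IsCoprime a₁ a₂) (hcop13 : IsCoprime a₁ a₃) (hcop23 : IsCoprime a₂ a₃)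
    (hb₁ : 0 < b₁) (hb₁' : b₁ < a₁) (hb₂ : 0 < b₂) (hb₂' : b₂ < a₂)
    (hb₃ : 0 < b₃) (hb₃' : b₃ < a₃)
    (hε : ε = 1 ∨ ε = -1)
    (heq : (b₁ : ℚ) / a₁ + (b₂ : ℚ) / a₂ + (b₃ : ℚ) / a₃
      = 1 + (ε : ℚ) / ((a₁ : ℚ) * a₂ * a₃))
    (hord₁ : (b₂ : ℚ) / a₂ < (b₁ : ℚ) / a₁) (hord₂ : (b₃ : ℚ) / a₃ < (b₂ : ℚ) / a₂)
    (hhalf : (1 : ℚ) / 2 ≤ (b₁ : ℚ) / a₁) :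
    4 ≤ ⌊(1 : ℚ) / ((1 - (b₁ : ℚ) / a₁) - (b₂ : ℚ) / a₂)⌋ :=
  stmt_4_general a₁ a₂ a₃ b₁ b₂ b₃ ε ha₁ ha₂ ha₃ hb₃ hε heq hord₂ hhalf
end

section
/- Let n ≥ 3 and rationals b_1/a_1 ≥ b_2/a_2 ≥ ⋯ ≥ b_n/a_n with a_i, b_i positive integers and 0 < b_i < a_i. Suppose b_1/a_1 ≥ 1/2 and there exist positive integers α < m satisfying Property (*). Then b_i/a_i < 1/2 for all i ≥ 2, and b_n/a_n < 1/3 (so in particular a_n ≥ 4). -/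
theorem stmt_6 (n : ℕ) (hn : 3 ≤ n) (a b : ℕ → ℤ)
    (ha : ∀ i, 1 ≤ i → i ≤ n → 2 ≤ a i)
    (hb : ∀ i, 1 ≤ i → i ≤ n → 0 < b i ∧ b i < a i)
    (hord : ∀ i j, 1 ≤ i → i ≤ j → j ≤ n → (b j : ℚ) / a j ≤ (b i : ℚ) / a i)
    (hhalf : (1 : ℚ) / 2 ≤ (b 1 : ℚ) / a 1)
    (hstar : ∃ α m : ℤ, 0 < α ∧ α < m ∧
      (b 1 : ℚ) / a 1 < ((m : ℚ) - α) / m ∧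
      (b 2 : ℚ) / a 2 < (α : ℚ) / m ∧
      ∀ i, 3 ≤ i → i ≤ n → (b i : ℚ) / a i < 1 / (m : ℚ)) :
    (∀ i, 2 ≤ i → i ≤ n → (b i : ℚ) / a i < 1 / 2) ∧
      (b n : ℚ) / a n < 1 / 3 ∧ 4 ≤ a n := by
  obtain ⟨α, m, hα, hαm, h1, h2, h3⟩ := hstar
  have hm0 : (0:ℚ) < (m:ℚ) := by exact_mod_cast hα.trans hαm
  have hhm : (1:ℚ)/2 < ((m:ℚ) - α)/m := lt_of_le_of_lt hhalf h1
  rw [div_lt_div_iff₀ two_pos hm0] at hhm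
  have h2α : (2*α:ℚ) < m := by push_cast at hhm ⊢; linarith
  have hαhalf : (α:ℚ)/m < 1/2 := by
    rw [div_lt_div_iff₀ hm0 two_pos]; linarith
  have hm3 : (3:ℤ) ≤ m := by
    have : (2*α:ℤ) < m := by exact_mod_cast h2α
    omega
  have part1 : ∀ i, 2 ≤ i → i ≤ n → (b i : ℚ) / a i < 1 / 2 := by
    intro i h2i hin
    have := hord 2 i (by omega) h2i hin
    linarith
  refine ⟨part1, ?_, ?_⟩
  · have hn3 := h3 n hn le_rfl
    have : (1:ℚ)/m ≤ 1/3 := by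
      apply one_div_le_one_div_of_le (by norm_num)
      exact_mod_cast hm3
    linarith
  · have hbn := hb n (by omega) le_rfl
    have han := ha n (by omega) le_rfl
    have ha0 : (0:ℚ) < (a n : ℚ) := by exact_mod_cast lt_of_lt_of_le (by norm_num) han
    have hbn1 : (1:ℚ) ≤ (b n : ℚ) := by exact_mod_cast hbn.1
    have h1a : (1:ℚ)/(a n) ≤ (b n : ℚ)/ a n := by gcongr
    have hn3 := h3 n hn le_rfl
    have hlt : (1:ℚ)/(a n) < 1/3 := by
      have : (1:ℚ)/m ≤ 1/3 := by
        apply one_div_le_one_div_of_le (by norm_num)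
        exact_mod_cast hm3
      linarith
    have : (3:ℚ) < (a n : ℚ) := by
      rw [div_lt_div_iff₀ ha0 (by norm_num)] at hlt; linarith
    have : (3:ℤ) < a n := by exact_mod_cast this
    omega
end

section
/- Let a_1, a_2, a_3 ≥ 2 be integers with b_1, b_2, b_3 positive integers, 0 < b_i < a_i, ordered with b_1/a_1 ≥ b_2/a_2 ≥ b_3/a_3. Assume 1/a_1 + 1/a_2 + 1/a_3 ≥ 1 and b_1/a_1 + b_2/a_2 + b_3/a_3 ≠ 1. Then there exist no positive integers α < m satisfying Property (*): b_1/a_1 < (m−α)/m, b_2/a_2 < α/m, b_3/a_3 < 1/m. -/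
theorem stmt_9 (a₁ a₂ a₃ b₁ b₂ b₃ : ℤ)
    (ha₁ : 2 ≤ a₁) (ha₂ : 2 ≤ a₂) (ha₃ : 2 ≤ a₃)
    (hb₁ : 0 < b₁) (hb₁' : b₁ < a₁) (hb₂ : 0 < b₂) (hb₂' : b₂ < a₂)
    (hb₃ : 0 < b₃) (hb₃' : b₃ < a₃)
    (hord₁ : (b₂ : ℚ) / a₂ ≤ (b₁ : ℚ) / a₁) (hord₂ : (b₃ : ℚ) / a₃ ≤ (b₂ : ℚ) / a₂)
    (hchi : 1 ≤ 1 / (a₁ : ℚ) + 1 / (a₂ : ℚ) + 1 / (a₃ : ℚ))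
    (hne : (b₁ : ℚ) / a₁ + (b₂ : ℚ) / a₂ + (b₃ : ℚ) / a₃ ≠ 1) :
    ¬ ∃ α m : ℤ, 0 < α ∧ α < m ∧
      (b₁ : ℚ) / a₁ < ((m : ℚ) - α) / m ∧
      (b₂ : ℚ) / a₂ < (α : ℚ) / m ∧
      (b₃ : ℚ) / a₃ < 1 / (m : ℚ) := by
  rintro ⟨α, m, hα, hαm, h1, h2, h3⟩
  have hmZ : (0:ℤ) < m := hα.trans hαm
  have ha₁' : (0:ℚ) < (a₁:ℚ) := by exact_mod_cast (by linarith : (0:ℤ) < a₁)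
  have ha₂' : (0:ℚ) < (a₂:ℚ) := by exact_mod_cast (by linarith : (0:ℤ) < a₂)
  have ha₃' : (0:ℚ) < (a₃:ℚ) := by exact_mod_cast (by linarith : (0:ℤ) < a₃)
  have hm' : (0:ℚ) < (m:ℚ) := by exact_mod_cast hmZ
  -- sharpen the strict rational inequalities to integer inequalities
  have k1 : b₁ * m + 1 ≤ (m - α) * a₁ := by
    have h := (div_lt_div_iff₀ ha₁' hm').mp h1
    have h' : b₁ * m < (m - α) * a₁ := by exact_mod_cast h
    linarith
  have k2 : b₂ * m + 1 ≤ α * a₂ := by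
    have h := (div_lt_div_iff₀ ha₂' hm').mp h2
    have h' : b₂ * m < α * a₂ := by exact_mod_cast h
    linarith
  have k3 : b₃ * m + 1 ≤ a₃ := by
    have h := (div_lt_div_iff₀ ha₃' hm').mp h3
    have h' : b₃ * m < 1 * a₃ := by exact_mod_cast h
    linarith
  -- clear denominators in hchi
  have hc : (a₁:ℚ) * a₂ * a₃ ≤ (a₂:ℚ) * a₃ + a₁ * a₃ + a₁ * a₂ := by
    have h := mul_le_mul_of_nonneg_right hchi (le_of_lt (by positivity : (0:ℚ) < a₁ * a₂ * a₃))
    field_simp at h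
    linarith
  have hcZ : a₁ * a₂ * a₃ ≤ a₂ * a₃ + a₁ * a₃ + a₁ * a₂ := by exact_mod_cast hc
  -- positivity of products
  have p23 : (0:ℤ) < a₂ * a₃ := by positivity
  have p13 : (0:ℤ) < a₁ * a₃ := by positivity
  have p12 : (0:ℤ) < a₁ * a₂ := by positivity
  -- upper bound for the numerator sum
  have hup : b₁ * (a₂ * a₃) + b₂ * (a₁ * a₃) + b₃ * (a₁ * a₂) ≤ a₁ * a₂ * a₃ := by
    have w1 := mul_le_mul_of_nonneg_right k1 p23.le
    have w2 := mul_le_mul_of_nonneg_right k2 p13.le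
    have w3 := mul_le_mul_of_nonneg_right k3 p12.le
    nlinarith [w1, w2, w3, hcZ, hmZ]
  -- lower bound for the numerator sum
  have hlo : a₁ * a₂ * a₃ ≤ b₁ * (a₂ * a₃) + b₂ * (a₁ * a₃) + b₃ * (a₁ * a₂) := by
    have e1 : a₂ * a₃ ≤ b₁ * (a₂ * a₃) := le_mul_of_one_le_left p23.le hb₁
    have e2 : a₁ * a₃ ≤ b₂ * (a₁ * a₃) := le_mul_of_one_le_left p13.le hb₂
    have e3 : a₁ * a₂ ≤ b₃ * (a₁ * a₂) := le_mul_of_one_le_left p12.le hb₃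
    linarith
  have heq : b₁ * (a₂ * a₃) + b₂ * (a₁ * a₃) + b₃ * (a₁ * a₂) = a₁ * a₂ * a₃ :=
    le_antisymm hup hlo
  apply hne
  have heqQ : (b₁:ℚ) * (a₂ * a₃) + b₂ * (a₁ * a₃) + b₃ * (a₁ * a₂) = a₁ * a₂ * a₃ := by
    exact_mod_cast heq
  field_simp
  linarith [heqQ]
end

section
/- Let a_1, a_2 ≥ 2 be coprime integers, 0 < b_1 < a_1, 0 < b_2 < a_2 positive integers, a = a_1 a_2 and b = a − b_1 a_2 − b_2 a_1 = 1. Set m = a − 1 and α = a_1 b_2. Then 0 < α < m, α < m(1 − b_1/a_1), m·(b_2/a_2) < α, and b/a < 1/m. -/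
theorem stmt_13 (a₁ a₂ b₁ b₂ : ℤ) (ha₁ : 2 ≤ a₁) (ha₂ : 2 ≤ a₂)
    (hcop : IsCoprime a₁ a₂)
    (hb₁ : 0 < b₁) (hb₁' : b₁ < a₁) (hb₂ : 0 < b₂) (hb₂' : b₂ < a₂)
    (a b : ℤ) (hadef : a = a₁ * a₂) (hbdef : b = a - b₁ * a₂ - b₂ * a₁) (hb1 : b = 1)
    (m α : ℤ) (hm : m = a - 1) (hα : α = a₁ * b₂) :
    0 < α ∧ α < m ∧
    (α : ℚ) < (m : ℚ) * (1 - (b₁ : ℚ) / a₁) ∧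
    (m : ℚ) * ((b₂ : ℚ) / a₂) < (α : ℚ) ∧
    (b : ℚ) / a < 1 / (m : ℚ) := by
  subst hadef hbdef hm hα
  have hkey : a₂ * (a₁ - b₁) = 1 + a₁ * b₂ := by linarith [hb1]
  have ha₁Q : (0:ℚ) < (a₁ : ℚ) := by exact_mod_cast by linarith
  have ha₂Q : (0:ℚ) < (a₂ : ℚ) := by exact_mod_cast by linarith
  have haQ : (0:ℚ) < ((a₁ * a₂ : ℤ) : ℚ) := by push_cast; positivity
  have hmQ : (0:ℚ) < ((a₁ * a₂ - 1 : ℤ) : ℚ) := by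
    have : (1:ℤ) < a₁ * a₂ := by nlinarith
    exact_mod_cast by linarith
  have hI : a₁ * b₂ * a₁ < (a₁ * a₂ - 1) * (a₁ - b₁) := by nlinarith [hkey, hb₁, ha₁]
  have hII : (a₁ * a₂ - 1) * b₂ < a₁ * b₂ * a₂ := by nlinarith
  refine ⟨by positivity, by nlinarith, ?_, ?_, ?_⟩
  · rw [show (1 - (b₁:ℚ)/a₁) = ((a₁:ℚ) - b₁)/a₁ by field_simp,
      ← mul_div_assoc, lt_div_iff₀ ha₁Q]
    exact_mod_cast hI
  · rw [← mul_div_assoc, div_lt_iff₀ ha₂Q]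
    exact_mod_cast hII
  · rw [div_lt_div_iff₀ haQ hmQ, hb1]
    push_cast
    nlinarith
end

section
/- Let a > b ≥ 2 be coprime positive integers and u, v positive coprime integers with au − bv = 1, 0 < u ≤ b, 0 < v ≤ a, and u ≠ 1. Then for every integer m with ⌊a/b⌋ − 1 ≤ m ≤ ⌊a/b⌋ and b/a < 1/m and m ≥ 2, one has u/v < 1/m. -/
theorem stmt_15 (a b u v : ℤ) (hb : 2 ≤ b) (hab : b < a) (hcop : IsCoprime a b)
    (hcopuv : IsCoprime u v) (hbez : a * u - b * v = 1)
    (hu0 : 0 < u) (hub : u ≤ b) (hv0 : 0 < v) (hva : v ≤ a) (hu1 : u ≠ 1)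
    (m : ℤ) (hm1 : ⌊(a : ℚ) / b⌋ - 1 ≤ m) (hm2 : m ≤ ⌊(a : ℚ) / b⌋)
    (hm3 : (b : ℚ) / a < 1 / (m : ℚ)) (hm4 : 2 ≤ m) :
    (u : ℚ) / v < 1 / (m : ℚ) := by
  have ha0 : (0:ℚ) < a := by exact_mod_cast lt_trans (by linarith) hab
  have hm0 : (0:ℚ) < m := by exact_mod_cast lt_of_lt_of_le (by norm_num) hm4
  have hbm : b * m < a := by
    have h := (div_lt_div_iff₀ ha0 hm0).mp hm3
    have : (b * m : ℚ) < a := by push_cast; linarith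
    exact_mod_cast this
  have hu2 : 2 ≤ u := by omega
  have key : m * u < v := by nlinarith
  rw [div_lt_div_iff₀ (by exact_mod_cast hv0) hm0]
  push_cast
  have : (m*u:ℚ) < v := by exact_mod_cast key
  linarith
end

section
/- Let a_1 ≥ 2, a_2 ≥ 3 be coprime integers, 0 < b_1 < a_1, 0 < b_2 < a_2, set α_1 = 1 − b_1/a_1, α_2 = b_2/a_2, a = a_1 a_2, b = a − b_1 a_2 − b_2 a_1 ≥ 2. Suppose b_1/a_1 ≥ 1/2, 2α_2 > α_1, and (when b_1/a_1 = 1/2) that a − bv = 1 for a positive integer v. Then (α_1 − α_2)/α_1 + α_1 < 1 − 1/a. -/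
/-!
Write `c = a₁ - b₁`, so `α₁ = c / a₁`. Clearing denominators, the inequality is equivalent to
`c² a₂ + c < b₂ a₁²`, and the hypotheses become `2c ≤ a₁` and `c a₂ < 2 b₂ a₁`. If `2c < a₁`
this follows by chaining the two. If `a₁ = 2c`, it reduces to `c (4 b₂ - a₂) > 1`; the only
failure, `c (4 b₂ - a₂) = 1`, forces `a = 4b + 2`, and then `a - bv = 1` makes `b` divide `1`,
contradicting `b ≥ 2`.
-/

lemma div_sub_div_div_add_lt_one_sub_iff {K : Type*} [Field K] [LinearOrder K]
    [IsStrictOrderedRing K] {c a₁ a₂ b₂ : K} (hc : 0 < c) (ha₁ : 0 < a₁) (ha₂ : 0 < a₂) :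
    (c / a₁ - b₂ / a₂) / (c / a₁) + c / a₁ < 1 - 1 / (a₁ * a₂) ↔
      c ^ 2 * a₂ + c < b₂ * a₁ ^ 2 := by
  have hdiff : 1 - 1 / (a₁ * a₂) - ((c / a₁ - b₂ / a₂) / (c / a₁) + c / a₁)
      = (b₂ * a₁ ^ 2 - (c ^ 2 * a₂ + c)) / (a₁ * a₂ * c) := by
    field_simp
    ring
  rw [← sub_pos, hdiff, div_pos_iff_of_pos_right (by positivity), sub_pos]

lemma sq_mul_add_lt_of_two_mul_lt {c a₁ a₂ b₂ : ℤ} (hc : 0 < c) (hb₂ : 0 < b₂)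
    (h2c : 2 * c < a₁) (h : c * a₂ < 2 * b₂ * a₁) : c ^ 2 * a₂ + c < b₂ * a₁ ^ 2 :=
  calc c ^ 2 * a₂ + c = c * (c * a₂ + 1) := by ring
    _ ≤ c * (2 * b₂ * a₁) := by gcongr; omega
    _ = 2 * c * (b₂ * a₁) := by ring
    _ ≤ (a₁ - 1) * (b₂ * a₁) :=
        mul_le_mul_of_nonneg_right (by omega) (mul_pos hb₂ (by omega)).le
    _ < b₂ * a₁ ^ 2 := by nlinarith

lemma sq_mul_add_lt_of_mul_sub_ne_one {c a₂ b₂ : ℤ} (hc : 0 < c) (h : a₂ < 4 * b₂)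
    (hne : c * (4 * b₂ - a₂) ≠ 1) : c ^ 2 * a₂ + c < b₂ * (2 * c) ^ 2 := by
  have h2 : 2 ≤ c * (4 * b₂ - a₂) := by
    have : 0 < c * (4 * b₂ - a₂) := mul_pos hc (by omega)
    omega
  nlinarith

lemma four_mul_add_two_sub_mul_ne_one {b : ℤ} (hb : 2 ≤ b) (v : ℤ) : 4 * b + 2 - b * v ≠ 1 := by
  intro h
  have : b ∣ 1 := ⟨v - 4, by linarith⟩
  have := Int.le_of_dvd one_pos this
  omega

theorem stmt_18_general (a₁ a₂ b₁ b₂ : ℤ) (ha₁ : 2 ≤ a₁) (ha₂ : 3 ≤ a₂)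
    (hb₁' : b₁ < a₁) (hb₂ : 0 < b₂)
    (α₁ α₂ : ℚ) (hα₁ : α₁ = 1 - (b₁ : ℚ) / a₁) (hα₂ : α₂ = (b₂ : ℚ) / a₂)
    (a b : ℤ) (hadef : a = a₁ * a₂) (hbdef : b = a - b₁ * a₂ - b₂ * a₁) (hb2 : 2 ≤ b)
    (hhalf : (1 : ℚ) / 2 ≤ (b₁ : ℚ) / a₁)
    (h6 : α₁ < 2 * α₂)
    (hbez : (b₁ : ℚ) / a₁ = 1 / 2 → ∃ v : ℤ, 0 < v ∧ a - b * v = 1) :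
    (α₁ - α₂) / α₁ + α₁ < 1 - 1 / (a : ℚ) := by
  have hA₁ : (0 : ℚ) < a₁ := by exact_mod_cast (by omega : (0 : ℤ) < a₁)
  have hA₂ : (0 : ℚ) < a₂ := by exact_mod_cast (by omega : (0 : ℤ) < a₂)
  obtain ⟨c, rfl⟩ : ∃ c, b₁ = a₁ - c := ⟨a₁ - b₁, by ring⟩
  have hc : 0 < c := by omega
  have hα₁c : α₁ = (c : ℚ) / a₁ := by rw [hα₁]; push_cast; field_simp; ring
  have h2c : 2 * c ≤ a₁ := by
    rw [div_le_div_iff₀ two_pos hA₁] at hhalf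
    push_cast at hhalf
    exact_mod_cast (by linarith : (2 * c : ℚ) ≤ a₁)
  have h6' : c * a₂ < 2 * b₂ * a₁ := by
    rw [hα₁c, hα₂, ← mul_div_assoc, div_lt_div_iff₀ hA₁ hA₂] at h6
    exact_mod_cast h6
  have key : c ^ 2 * a₂ + c < b₂ * a₁ ^ 2 := by
    rcases h2c.lt_or_eq with hlt | heq
    · exact sq_mul_add_lt_of_two_mul_lt hc hb₂ hlt h6'
    subst heq
    obtain ⟨v, -, hv⟩ := hbez (by push_cast; field_simp; ring)
    refine sq_mul_add_lt_of_mul_sub_ne_one hc (by nlinarith) fun h ↦ ?_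
    subst hadef hbdef
    exact four_mul_add_two_sub_mul_ne_one hb2 v (by linear_combination hv - 2 * h)
  rw [hα₁c, hα₂, hadef, Int.cast_mul]
  exact (div_sub_div_div_add_lt_one_sub_iff (by exact_mod_cast hc) hA₁ hA₂).2
    (by exact_mod_cast key)

theorem stmt_18 (a₁ a₂ b₁ b₂ : ℤ) (ha₁ : 2 ≤ a₁) (ha₂ : 3 ≤ a₂)
    (hcop : IsCoprime a₁ a₂)
    (hb₁ : 0 < b₁) (hb₁' : b₁ < a₁) (hb₂ : 0 < b₂) (hb₂' : b₂ < a₂)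
    (α₁ α₂ : ℚ) (hα₁ : α₁ = 1 - (b₁ : ℚ) / a₁) (hα₂ : α₂ = (b₂ : ℚ) / a₂)
    (a b : ℤ) (hadef : a = a₁ * a₂) (hbdef : b = a - b₁ * a₂ - b₂ * a₁) (hb2 : 2 ≤ b)
    (hhalf : (1 : ℚ) / 2 ≤ (b₁ : ℚ) / a₁)
    (h6 : α₁ < 2 * α₂)
    (hbez : (b₁ : ℚ) / a₁ = 1 / 2 → ∃ v : ℤ, 0 < v ∧ a - b * v = 1) :
    (α₁ - α₂) / α₁ + α₁ < 1 - 1 / (a : ℚ) :=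
  stmt_18_general a₁ a₂ b₁ b₂ ha₁ ha₂ hb₁' hb₂ α₁ α₂ hα₁ hα₂ a b hadef hbdef hb2 hhalf h6 hbez
end

section
/- Let a_1, a_2, a_3 ≥ 2 be pairwise coprime positive integers and b_1, b_2, b_3 positive integers with 0 < b_i < a_i, satisfying b_1/a_1 + b_2/a_2 + b_3/a_3 = 1 + ε/(a_1 a_2 a_3) with ε ∈ {−1,1}, ordered with b_1/a_1 > b_2/a_2 > b_3/a_3, and with (a_1,a_2,a_3,b_1,b_2,b_3) ≠ (2,3,5,1,1,1). Then there exist positive integers α < m such that b_1/a_1 < (m−α)/m, b_2/a_2 < α/m, and b_3/a_3 < 1/m. -/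
/-!
Let `D = (a₁ - b₁) a₂ - b₂ a₁`, so that the interval `(b₂/a₂, 1 - b₁/a₁)` has length `D / (a₁ a₂)`
and `a₃ D = a₁ a₂ b₃ - ε`; in particular `D ≥ 1`. Let `α/m` be the fraction of least denominator in
this interval. Its Farey parents `L/l < α/m < R/r` (with `m = l + r`, `R l - L r = 1`) lie outside
the interval, so `l r D ≤ a₁ a₂`. If `l = 1` then `α = 1` and `b₃/a₃ < b₂/a₂ < 1/m`. If `r = 1`
then `b₂/a₂ ≥ (l - 1)/l ≥ 1/2 > b₁/a₁`, which is impossible. Otherwise `l r ≥ m + 1`, hence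
`(m + 1) D < a₁ a₂` unless `{l, r} = {2, 3}` and the interval is exactly `[L/l, R/r]`; and
`(m + 1) D < a₁ a₂` gives `b₃ m < a₃` through `a₃ D = a₁ a₂ b₃ - ε`. The ordering `b₂/a₂ < b₁/a₁` leaves only `[1/3, 1/2]`
and `m = 5`; then `b₁ b₂ (6 b₃ - a₃) = ε`, and `5 b₃ < a₃` fails only for the Poincaré sphere.
-/

theorem Rat.intCast_div_lt_intCast_div_iff {a b c d : ℤ} (hb : 0 < b) (hd : 0 < d) :
    (a : ℚ) / b < c / d ↔ a * d < c * b := by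
  rw [div_lt_div_iff₀ (by exact_mod_cast hb) (by exact_mod_cast hd)]
  norm_cast

theorem Rat.intCast_div_le_intCast_div_iff {a b c d : ℤ} (hb : 0 < b) (hd : 0 < d) :
    (a : ℚ) / b ≤ c / d ↔ a * d ≤ c * b := by
  rw [div_le_div_iff₀ (by exact_mod_cast hb) (by exact_mod_cast hd)]
  norm_cast

theorem Rat.den_intCast_div_le {a b : ℤ} (hb : 0 < b) : (((a : ℚ) / b).den : ℤ) ≤ b := by
  rw [Rat.intCast_div_eq_divInt]
  exact Int.le_of_dvd hb (Rat.den_dvd a b)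

theorem Rat.exists_farey_neighbours {u v : ℚ} (hu : 0 ≤ u) (huv : u < v) (hv : v ≤ 1) :
    ∃ L l R r : ℤ, 0 < l ∧ 0 < r ∧ R * l - L * r = 1 ∧ (L : ℚ) / l ≤ u ∧
      u < ((L + R : ℤ) : ℚ) / (l + r : ℤ) ∧ ((L + R : ℤ) : ℚ) / (l + r : ℤ) < v ∧
      v ≤ (R : ℚ) / r := by
  classical
  have hex : ∃ n : ℕ, ∃ q : ℚ, u < q ∧ q < v ∧ q.den = n :=
    ⟨_, (u + v) / 2, by linarith, by linarith, rfl⟩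
  obtain ⟨q, hqu, hqv, hqden⟩ := Nat.find_spec hex
  have hmin : ∀ a b : ℤ, 0 < b → u < a / b → (a : ℚ) / b < v → (q.den : ℤ) ≤ b := by
    intro a b hb h₁ h₂
    rw [hqden]
    exact (Int.ofNat_le.2 (Nat.find_min' hex ⟨_, h₁, h₂, rfl⟩)).trans (Rat.den_intCast_div_le hb)
  set α := q.num
  set m : ℤ := (q.den : ℤ)
  have hq : q = (α : ℚ) / m := (Rat.num_div_den q).symm
  have hm : 2 ≤ m := by
    by_contra! h
    have : 0 < m := Int.natCast_pos.2 q.den_pos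
    have : q = α := by rw [hq, show m = 1 by omega]; simp
    have h₀ : (0 : ℚ) < α := this ▸ hu.trans_lt hqu
    have h₁ : (α : ℚ) < 1 := this ▸ hqv.trans_le hv
    norm_cast at h₀ h₁
    omega
  obtain ⟨x, y, hxy⟩ := Rat.isCoprime_num_den q
  -- `l` is the inverse of `α` modulo `m`
  set l := x % m
  set L := -(y + α * (x / m))
  have hdet : α * l - L * m = 1 := by linear_combination hxy + α * Int.emod_def x m
  have hl : 0 < l := by
    refine lt_of_le_of_ne (Int.emod_nonneg x (by omega)) fun h => ?_
    have : m ∣ 1 := ⟨-L, by rw [← h] at hdet; linarith⟩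
    have := Int.le_of_dvd one_pos this
    omega
  have hlm : l < m := Int.emod_lt_of_pos x (by omega)
  have hmediant : ((L + (α - L) : ℤ) : ℚ) / (l + (m - l) : ℤ) = q := by
    rw [hq]; congr 1 <;> push_cast <;> ring
  have hleft : (L : ℚ) / l < α / m :=
    (Rat.intCast_div_lt_intCast_div_iff hl (by omega)).2 (by linarith)
  have hright : (α : ℚ) / m < (α - L : ℤ) / (m - l : ℤ) :=
    (Rat.intCast_div_lt_intCast_div_iff (by omega) (by omega)).2 (by linarith)
  refine ⟨L, l, α - L, m - l, hl, by omega, by linear_combination hdet, ?_,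
    hmediant ▸ hqu, hmediant ▸ hqv, ?_⟩
  · by_contra! h
    have := hmin L l hl h (hleft.trans (hq ▸ hqv))
    omega
  · by_contra! h
    have := hmin _ _ (by omega) ((hq ▸ hqu).trans hright) h
    omega

theorem Int.exists_farey_neighbours {p q p' q' : ℤ} (hq : 0 < q) (hq' : 0 < q') (hp : 0 ≤ p)
    (hlt : p * q' < p' * q) (hp' : p' ≤ q') :
    ∃ L l R r : ℤ, 0 < l ∧ 0 < r ∧ R * l - L * r = 1 ∧ L * q ≤ p * l ∧ p' * r ≤ R * q' ∧
      p * (l + r) < (L + R) * q ∧ (L + R) * q' < p' * (l + r) := by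
  obtain ⟨L, l, R, r, hl, hr, hdet, hL, hlo, hhi, hR⟩ := Rat.exists_farey_neighbours
    (u := p / q) (v := p' / q') (by positivity)
    ((Rat.intCast_div_lt_intCast_div_iff hq hq').2 hlt)
    ((div_le_one (by exact_mod_cast hq')).2 (by exact_mod_cast hp'))
  have hm : 0 < l + r := by omega
  exact ⟨L, l, R, r, hl, hr, hdet, (Rat.intCast_div_le_intCast_div_iff hl hq).1 hL,
    (Rat.intCast_div_le_intCast_div_iff hq' hr).1 hR,
    (Rat.intCast_div_lt_intCast_div_iff hq hm).1 hlo,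
    (Rat.intCast_div_lt_intCast_div_iff hm hq').1 hhi⟩

theorem Int.add_add_one_le_mul_of_farey {L l R r : ℤ} (hl : 2 ≤ l) (hr : 2 ≤ r)
    (hdet : R * l - L * r = 1) : l + r + 1 ≤ l * r := by
  rcases (by omega : l = 2 ∧ r = 2 ∨ 3 ≤ l ∨ 3 ≤ r) with ⟨rfl, rfl⟩ | h | h
  · omega
  all_goals nlinarith

theorem Int.farey_add_add_one_mul_gap_lt_or {p q p' q' L l R r : ℤ} (hq : 0 < q) (hq' : 0 < q')
    (hl : 2 ≤ l) (hr : 2 ≤ r) (hdet : R * l - L * r = 1) (hL : L * q ≤ p * l)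
    (hR : p' * r ≤ R * q') (hD : 0 < p' * q - p * q') :
    (l + r + 1) * (p' * q - p * q') < q * q' ∨
      l * r = l + r + 1 ∧ L * q = p * l ∧ p' * r = R * q' := by
  have hlr := Int.add_add_one_le_mul_of_farey hl hr hdet
  have hslack : q * q' - l * r * (p' * q - p * q') =
      q * l * (R * q' - p' * r) + q' * r * (p * l - L * q) := by
    linear_combination (-(q * q')) * hdet
  have h₁ : 0 ≤ q * l * (R * q' - p' * r) := mul_nonneg (by positivity) (by linarith)
  have h₂ : 0 ≤ q' * r * (p * l - L * q) := mul_nonneg (by positivity) (by linarith)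
  by_cases hend : L * q = p * l ∧ p' * r = R * q'
  · rcases hlr.lt_or_eq with hlt | heq
    · left
      nlinarith
    · exact Or.inr ⟨heq.symm, hend⟩
  · left
    have : 0 < q * l * (R * q' - p' * r) + q' * r * (p * l - L * q) := by
      rcases not_and_or.1 hend with h | h
      · exact add_pos_of_nonneg_of_pos h₁ (mul_pos (by positivity) (by omega))
      · exact add_pos_of_pos_of_nonneg (mul_pos (by positivity) (by omega)) h₂
    nlinarith

theorem Int.mul_lt_of_add_one_mul_lt {a b D N ε m : ℤ} (hb : 0 < b) (hD : 0 < D) (hε : ε ≤ 1)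
    (h : a * D = N * b - ε) (hm : (m + 1) * D < N) : b * m < a := by
  have : b * m * D < a * D := by nlinarith
  exact lt_of_mul_lt_mul_right this hD.le

section ThreeFractions

variable {a₁ a₂ a₃ b₁ b₂ b₃ ε L l R r : ℤ}

theorem mul_lt_of_farey_left_one (ha₃ : 0 < a₃) (hb₂ : 0 < b₂) (hb₂' : b₂ < a₂)
    (hw : b₃ * a₂ < b₂ * a₃) (hr : 0 < r) (hdet : R * 1 - L * r = 1) (hL : L * a₂ ≤ b₂ * 1)
    (hlo : b₂ * (1 + r) < (L + R) * a₂) : b₃ * (1 + r) < a₃ := by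
  have hL₀ : L ≤ 0 := by nlinarith
  have hα : L + R ≤ 1 := by nlinarith
  have hm : b₂ * (1 + r) < a₂ := by nlinarith
  nlinarith

theorem false_of_farey_right_one (hb₁ : 0 < b₁) (hb₁' : b₁ < a₁) (hb₂ : 0 < b₂)
    (hb₂' : b₂ < a₂) (hu : b₂ * a₁ < b₁ * a₂) (hl : 2 ≤ l) (hdet : R * l - L * 1 = 1)
    (hL : L * a₂ ≤ b₂ * l) (hR : (a₁ - b₁) * 1 ≤ R * a₁)
    (hhi : (L + R) * a₁ < (a₁ - b₁) * (l + 1)) : False := by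
  have hR₁ : R = 1 := by
    have : 0 < R := by nlinarith
    have : L + R < l + 1 := by nlinarith
    nlinarith
  have h₂ : a₂ ≤ 2 * b₂ := by
    subst hR₁
    nlinarith
  have h₁ : a₁ < 2 * b₁ := by nlinarith
  nlinarith

theorem eq_of_farey_endpoints (hb₁ : 0 < b₁) (hb₁' : b₁ < a₁) (hb₂ : 0 < b₂) (hb₂' : b₂ < a₂)
    (hu : b₂ * a₁ < b₁ * a₂) (hl : 2 ≤ l) (hr : 2 ≤ r) (hlr : l * r = l + r + 1)
    (hdet : R * l - L * r = 1) (hL : L * a₂ = b₂ * l) (hR : (a₁ - b₁) * r = R * a₁) :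
    l + r = 5 ∧ a₁ = 2 * b₁ ∧ a₂ = 3 * b₂ := by
  have hl₃ : l ≤ 3 := by nlinarith
  have hr₃ : r ≤ 3 := by nlinarith
  have hL₀ : 0 < L := by nlinarith
  have hLl : L < l := by nlinarith
  obtain ⟨rfl, rfl⟩ | ⟨rfl, rfl⟩ : l = 2 ∧ r = 3 ∨ l = 3 ∧ r = 2 := by
    interval_cases l <;> interval_cases r <;> omega
  · obtain ⟨rfl, rfl⟩ : L = 1 ∧ R = 2 := by omega
    nlinarith
  · obtain ⟨rfl, rfl⟩ : L = 1 ∧ R = 1 := by omega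
    omega

theorem five_mul_lt_of_ne_poincare (hb₁ : 0 < b₁) (hb₂ : 0 < b₂) (hb₃ : 0 < b₃) (hε : ε ≤ 1)
    (hsum : b₁ * a₂ * a₃ + b₂ * a₁ * a₃ + b₃ * a₁ * a₂ = a₁ * a₂ * a₃ + ε)
    (h₁ : a₁ = 2 * b₁) (h₂ : a₂ = 3 * b₂)
    (hP : (a₁, a₂, a₃, b₁, b₂, b₃) ≠ (2, 3, 5, 1, 1, 1)) : 5 * b₃ < a₃ := by
  subst h₁ h₂
  have key : b₁ * b₂ * (6 * b₃ - a₃) = ε := by linear_combination hsum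
  by_contra! h
  have hb : 1 ≤ b₁ * b₂ := one_le_mul_of_one_le_of_one_le hb₁ hb₂
  have ht : 1 ≤ 6 * b₃ - a₃ := by omega
  have hb' : b₁ * b₂ = 1 := by nlinarith
  obtain ⟨rfl, rfl⟩ : b₁ = 1 ∧ b₂ = 1 := by constructor <;> nlinarith
  simp only [ne_eq, Prod.mk.injEq, true_and] at hP
  omega

theorem mul_lt_of_farey_neighbours (hb₁ : 0 < b₁) (hb₁' : b₁ < a₁) (hb₂ : 0 < b₂)
    (hb₂' : b₂ < a₂) (hb₃ : 0 < b₃) (hε : ε ≤ 1)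
    (hsum : b₁ * a₂ * a₃ + b₂ * a₁ * a₃ + b₃ * a₁ * a₂ = a₁ * a₂ * a₃ + ε)
    (hu : b₂ * a₁ < b₁ * a₂) (hw : b₃ * a₂ < b₂ * a₃)
    (hP : (a₁, a₂, a₃, b₁, b₂, b₃) ≠ (2, 3, 5, 1, 1, 1))
    (hD : 0 < (a₁ - b₁) * a₂ - b₂ * a₁) (hl : 0 < l) (hr : 0 < r) (hdet : R * l - L * r = 1)
    (hL : L * a₂ ≤ b₂ * l) (hR : (a₁ - b₁) * r ≤ R * a₁)
    (hlo : b₂ * (l + r) < (L + R) * a₂) (hhi : (L + R) * a₁ < (a₁ - b₁) * (l + r)) :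
    b₃ * (l + r) < a₃ := by
  rcases (by omega : l = 1 ∨ 2 ≤ l ∧ r = 1 ∨ 2 ≤ l ∧ 2 ≤ r) with rfl | ⟨hl, rfl⟩ | ⟨hl, hr⟩
  · exact mul_lt_of_farey_left_one (by nlinarith) hb₂ hb₂' hw hr hdet hL hlo
  · exact (false_of_farey_right_one hb₁ hb₁' hb₂ hb₂' hu hl hdet hL hR hhi).elim
  rcases Int.farey_add_add_one_mul_gap_lt_or (by omega) (by omega) hl hr hdet hL hR hD with
    hlt | ⟨hlr, hL, hR⟩
  · exact Int.mul_lt_of_add_one_mul_lt hb₃ hD hε (by linear_combination -hsum) hlt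
  obtain ⟨h₅, h₁, h₂⟩ := eq_of_farey_endpoints hb₁ hb₁' hb₂ hb₂' hu hl hr hlr hdet hL hR
  rw [h₅, mul_comm]
  exact five_mul_lt_of_ne_poincare hb₁ hb₂ hb₃ hε hsum h₁ h₂ hP

end ThreeFractions

theorem stmt_19_general (a₁ a₂ a₃ b₁ b₂ b₃ ε : ℤ)
    (hb₁ : 0 < b₁) (hb₁' : b₁ < a₁) (hb₂ : 0 < b₂) (hb₂' : b₂ < a₂)
    (hb₃ : 0 < b₃) (hb₃' : b₃ < a₃)
    (hε : ε = 1 ∨ ε = -1)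
    (heq : (b₁ : ℚ) / a₁ + (b₂ : ℚ) / a₂ + (b₃ : ℚ) / a₃
      = 1 + (ε : ℚ) / ((a₁ : ℚ) * a₂ * a₃))
    (hord₁ : (b₂ : ℚ) / a₂ < (b₁ : ℚ) / a₁) (hord₂ : (b₃ : ℚ) / a₃ < (b₂ : ℚ) / a₂)
    (hP : (a₁, a₂, a₃, b₁, b₂, b₃) ≠ (2, 3, 5, 1, 1, 1)) :
    ∃ α m : ℤ, 0 < α ∧ α < m ∧
      (b₁ : ℚ) / a₁ < ((m : ℚ) - α) / m ∧
      (b₂ : ℚ) / a₂ < (α : ℚ) / m ∧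
      (b₃ : ℚ) / a₃ < 1 / (m : ℚ) := by
  have ha₁ : 0 < a₁ := hb₁.trans hb₁'
  have ha₂ : 0 < a₂ := hb₂.trans hb₂'
  have ha₃ : 0 < a₃ := hb₃.trans hb₃'
  have hε₁ : ε ≤ 1 := by omega
  have hu := (Rat.intCast_div_lt_intCast_div_iff ha₂ ha₁).1 hord₁
  have hw := (Rat.intCast_div_lt_intCast_div_iff ha₃ ha₂).1 hord₂
  have hsum : b₁ * a₂ * a₃ + b₂ * a₁ * a₃ + b₃ * a₁ * a₂ = a₁ * a₂ * a₃ + ε := by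
    field_simp [ha₁.ne', ha₂.ne', ha₃.ne'] at heq
    qify
    linear_combination heq
  have hD : 0 < (a₁ - b₁) * a₂ - b₂ * a₁ := by
    have : 1 ≤ a₁ * b₃ := one_le_mul_of_one_le_of_one_le (by omega) hb₃
    refine pos_of_mul_pos_right (a := a₃) ?_ ha₃.le
    nlinarith
  obtain ⟨L, l, R, r, hl, hr, hdet, hL, hR, hlo, hhi⟩ :=
    Int.exists_farey_neighbours (p' := a₁ - b₁) ha₂ ha₁ hb₂.le (by linarith) (by linarith)
  have hm : b₃ * (l + r) < a₃ := mul_lt_of_farey_neighbours hb₁ hb₁' hb₂ hb₂' hb₃ hε₁ hsum hu hw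
    hP hD hl hr hdet hL hR hlo hhi
  have hm₀ : 0 < l + r := by omega
  refine ⟨L + R, l + r, by nlinarith, by nlinarith, ?_, ?_, ?_⟩
  · rw [← Int.cast_sub, Rat.intCast_div_lt_intCast_div_iff ha₁ hm₀]
    linarith
  · exact (Rat.intCast_div_lt_intCast_div_iff ha₂ hm₀).2 (by linarith)
  · rw [← Int.cast_one, Rat.intCast_div_lt_intCast_div_iff ha₃ hm₀]
    linarith

theorem stmt_19 (a₁ a₂ a₃ b₁ b₂ b₃ ε : ℤ)
    (ha₁ : 2 ≤ a₁) (ha₂ : 2 ≤ a₂) (ha₃ : 2 ≤ a₃)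
    (hcop12 : IsCoprime a₁ a₂) (hcop13 : IsCoprime a₁ a₃) (hcop23 : IsCoprime a₂ a₃)
    (hb₁ : 0 < b₁) (hb₁' : b₁ < a₁) (hb₂ : 0 < b₂) (hb₂' : b₂ < a₂)
    (hb₃ : 0 < b₃) (hb₃' : b₃ < a₃)
    (hε : ε = 1 ∨ ε = -1)
    (heq : (b₁ : ℚ) / a₁ + (b₂ : ℚ) / a₂ + (b₃ : ℚ) / a₃
      = 1 + (ε : ℚ) / ((a₁ : ℚ) * a₂ * a₃))
    (hord₁ : (b₂ : ℚ) / a₂ < (b₁ : ℚ) / a₁) (hord₂ : (b₃ : ℚ) / a₃ < (b₂ : ℚ) / a₂)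
    (hP : (a₁, a₂, a₃, b₁, b₂, b₃) ≠ (2, 3, 5, 1, 1, 1)) :
    ∃ α m : ℤ, 0 < α ∧ α < m ∧
      (b₁ : ℚ) / a₁ < ((m : ℚ) - α) / m ∧
      (b₂ : ℚ) / a₂ < (α : ℚ) / m ∧
      (b₃ : ℚ) / a₃ < 1 / (m : ℚ) :=
  stmt_19_general a₁ a₂ a₃ b₁ b₂ b₃ ε hb₁ hb₁' hb₂ hb₂' hb₃ hb₃' hε heq hord₁ hord₂ hP
end
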